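/- arXiv:2406.12740 — 5 statements merged into one kernel-verified Lean document; each statement's English description precedes it below -/
import Mathlib

section
/- Let Λ ≤ Γ be a commensurated subgroup, α : Γ → Sym(Γ/Λ) the left-multiplication homomorphism, G = Γ//Λ the Schlichting completion (closure of α(Γ) in the topology of pointwise convergence), and U the closure of α(Λ) in G. Then G = U · α(Γ), i.e., every element of G can be written as a product of an element of U and an element of α(Γ). -/
open scoped Pointwise

/-- The topology of pointwise convergence on `Equiv.Perm X` (with `X` discrete). -/
def permTop (X : Type*) : TopologicalSpace (Equiv.Perm X) :=
  letI : TopologicalSpace X := ⊥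
  TopologicalSpace.induced (fun σ => (σ : X → X)) inferInstance


lemma mem_closure_permTop {X : Type*} (S : Set (Equiv.Perm X)) (σ : Equiv.Perm X) :
    σ ∈ @closure _ (permTop X) S ↔ ∀ F : Finset X, ∃ τ ∈ S, ∀ x ∈ F, τ x = σ x := by
  classical
  letI : TopologicalSpace X := ⊥
  haveI : DiscreteTopology X := ⟨rfl⟩
  letI : TopologicalSpace (Equiv.Perm X) := permTop X
  rw [mem_closure_iff]
  constructor
  · intro h F
    obtain ⟨τ, hτo, hτS⟩ := h ((fun σ => (σ : X → X)) ⁻¹' (Set.pi ↑F (fun x => {σ x})))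
      (by exact isOpen_induced (isOpen_set_pi F.finite_toSet (fun a _ => isOpen_discrete _)))
      (by intro x hx; rfl)
    exact ⟨τ, hτS, fun x hx => hτo x hx⟩
  · intro h o ho hσ
    obtain ⟨V, hV, rfl⟩ := isOpen_induced_iff.mp ho
    obtain ⟨I, u, hu, hsub⟩ := isOpen_pi_iff.mp hV _ hσ
    obtain ⟨τ, hτS, hτ⟩ := h I
    refine ⟨τ, hsub (fun x hx => ?_), hτS⟩
    show τ x ∈ u x; rw [hτ x hx]; exact (hu x hx).2

/-- Le Boudec's lemma, part 1: the Schlichting completion `G = Γ//Λ` satisfies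
`G = U · α(Γ)` where `U` is the closure of `α(Λ)`. -/
theorem stmt_6 (Γ : Type*) [Group Γ] (Λ : Subgroup Γ)
    (hΛ : ∀ g : ConjAct Γ, Subgroup.Commensurable (g • Λ) Λ) :
    letI := permTop (Γ ⧸ Λ)
    closure (Set.range ⇑(MulAction.toPermHom Γ (Γ ⧸ Λ)))
      = closure (⇑(MulAction.toPermHom Γ (Γ ⧸ Λ)) '' Λ)
          * Set.range ⇑(MulAction.toPermHom Γ (Γ ⧸ Λ)) := by
  classical
  show _ = _
  set α := MulAction.toPermHom Γ (Γ ⧸ Λ) with hαdef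
  have hα : ∀ (g : Γ) (x : Γ ⧸ Λ), α g x = g • x := fun g x => rfl
  ext σ
  constructor
  · intro hσ
    obtain ⟨c, hc⟩ := QuotientGroup.mk_surjective (σ⁻¹ (QuotientGroup.mk (1 : Γ)))
    refine Set.mem_mul.mpr ⟨σ * α c, ?_, α c⁻¹, ⟨c⁻¹, rfl⟩, ?_⟩
    · rw [mem_closure_permTop]
      intro F
      obtain ⟨τ, ⟨γ, rfl⟩, hτ⟩ := (mem_closure_permTop _ σ).mp hσ
        (insert (QuotientGroup.mk c) (F.image (fun x => c • x)))
      have hγc : γ * c ∈ Λ := by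
        have h1 : α γ (QuotientGroup.mk c) = σ (QuotientGroup.mk c) :=
          hτ _ (Finset.mem_insert_self _ _)
        have h2 : σ (QuotientGroup.mk c) = QuotientGroup.mk (1 : Γ) := by
          rw [hc, Equiv.Perm.coe_inv, Equiv.apply_symm_apply]
        have : γ • (QuotientGroup.mk c : Γ ⧸ Λ) = QuotientGroup.mk (1 : Γ) := h1.trans h2
        rw [MulAction.Quotient.smul_mk, QuotientGroup.eq] at this
        simpa using Λ.inv_mem this
      refine ⟨α (γ * c), ⟨γ * c, hγc, rfl⟩, fun x hx => ?_⟩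
      have := hτ (c • x) (Finset.mem_insert_of_mem (Finset.mem_image_of_mem _ hx))
      simp only [hα] at this ⊢
      show (γ * c) • x = σ (α c x)
      rw [mul_smul, this, hα]
    · rw [mul_assoc, ← map_mul]
      simp
  · intro hσ
    obtain ⟨u, hu, τ, ⟨g, rfl⟩, rfl⟩ := Set.mem_mul.mp hσ
    rw [mem_closure_permTop]
    intro F
    obtain ⟨τ', ⟨l, hl, hτ'⟩, hagree⟩ := (mem_closure_permTop _ u).mp hu
      (F.image (fun x => g • x))
    refine ⟨α (l * g), ⟨l * g, rfl⟩, fun x hx => ?_⟩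
    have := hagree (g • x) (Finset.mem_image_of_mem _ hx)
    rw [← hτ'] at this
    show (l * g) • x = u (α g x)
    rw [mul_smul, ← hα l, this, hα]
end

section
/- Let Λ ≤ Γ be a commensurated subgroup, G = Γ//Λ its Schlichting completion with canonical morphism α : Γ → G, and U the closure of α(Λ) in G. Then α induces a bijection Γ/Λ → G/U between coset spaces, given by γΛ ↦ α(γ)U. -/
open scoped Pointwise

section Aux

variable {X : Type*}

/-- Approximation on finite sets from closure membership. -/
private lemma permTop_approx {s : Set (Equiv.Perm X)} {x : Equiv.Perm X}
    (hx : x ∈ @closure _ (permTop X) s) (F : Finset X) :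
    ∃ σ ∈ s, ∀ p ∈ F, σ p = x p := by
  letI : TopologicalSpace X := ⊥
  haveI : DiscreteTopology X := ⟨rfl⟩
  letI : TopologicalSpace (Equiv.Perm X) := permTop X
  rw [mem_closure_iff] at hx
  have hcont : Continuous (fun σ : Equiv.Perm X => (σ : X → X)) := continuous_induced_dom
  have hopen : IsOpen
      ((fun σ : Equiv.Perm X => (σ : X → X)) ⁻¹' ((F : Set X).pi fun p => {x p})) :=
    (isOpen_set_pi F.finite_toSet (fun p _ => isOpen_discrete _)).preimage hcont
  have hxmem : x ∈ (fun σ : Equiv.Perm X => (σ : X → X)) ⁻¹'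
      ((F : Set X).pi fun p => {x p}) := fun p _ => rfl
  obtain ⟨σ, hσO, hσs⟩ := hx _ hopen hxmem
  exact ⟨σ, hσs, fun p hp => hσO p (Finset.mem_coe.mpr hp)⟩

/-- Converse: finite-set approximation gives closure membership. -/
private lemma permTop_mem_closure {s : Set (Equiv.Perm X)} {x : Equiv.Perm X}
    (h : ∀ F : Finset X, ∃ σ ∈ s, ∀ p ∈ F, σ p = x p) :
    x ∈ @closure _ (permTop X) s := by
  letI : TopologicalSpace X := ⊥
  haveI : DiscreteTopology X := ⟨rfl⟩
  letI : TopologicalSpace (Equiv.Perm X) := permTop X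
  rw [mem_closure_iff]
  intro O hO hxO
  obtain ⟨O', hO', rfl⟩ := (isOpen_induced_iff (f := fun σ : Equiv.Perm X => (σ : X → X))).mp hO
  obtain ⟨I, u, hu, hpi⟩ := isOpen_pi_iff.mp hO' _ hxO
  obtain ⟨σ, hσs, hσ⟩ := h I
  refine ⟨σ, hpi fun p hp => ?_, hσs⟩
  show σ p ∈ u p
  rw [hσ p (Finset.mem_coe.mp hp)]
  exact (hu p (Finset.mem_coe.mp hp)).2

end Aux

/-- The map `γΛ ↦ α(γ)U` is a bijection `Γ/Λ → G/U`, where `G = Γ//Λ` is the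
Schlichting completion and `U` the closure of `α(Λ)`.  The quotient `G/U` is
realized as the quotient of the subtype `G` by the left-coset relation for `U`. -/
theorem stmt_7 (Γ : Type*) [Group Γ] (Λ : Subgroup Γ)
    (hΛ : ∀ g : ConjAct Γ, Subgroup.Commensurable (g • Λ) Λ) :
    letI := permTop (Γ ⧸ Λ)
    let α := MulAction.toPermHom Γ (Γ ⧸ Λ)
    let r : {x // x ∈ closure (Set.range ⇑α)} → {x // x ∈ closure (Set.range ⇑α)} → Prop :=
      fun x y => (x : Equiv.Perm (Γ ⧸ Λ))⁻¹ * (y : Equiv.Perm (Γ ⧸ Λ))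
        ∈ closure (⇑α '' Λ)
    ∃ e : (Γ ⧸ Λ) ≃ Quot r,
      ∀ γ : Γ, e (QuotientGroup.mk γ) = Quot.mk r ⟨α γ, subset_closure ⟨γ, rfl⟩⟩ := by
  intro α r
  letI T := permTop (Γ ⧸ Λ)
  classical
  -- basic computation lemma
  have hα : ∀ (γ g : Γ), (α γ) (QuotientGroup.mk g) = QuotientGroup.mk (γ * g) :=
    fun γ g => rfl
  -- every element of the closure of `α '' Λ` fixes the identity coset
  have hfix : ∀ σ : Equiv.Perm (Γ ⧸ Λ), σ ∈ @closure _ T (⇑α '' (Λ : Set Γ)) →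
      σ (QuotientGroup.mk (1 : Γ)) = QuotientGroup.mk (1 : Γ) := by
    intro σ hσ
    obtain ⟨τ, ⟨l, hl, rfl⟩, hτ⟩ := permTop_approx hσ {QuotientGroup.mk (1 : Γ)}
    have h1 := hτ _ (Finset.mem_singleton_self _)
    rw [← h1, hα]
    exact QuotientGroup.eq.mpr (by simpa using hl)
  -- the forward map descends to the quotient
  have hwd : ∀ (a b : Γ), QuotientGroup.leftRel Λ a b →
      Quot.mk r ⟨α a, subset_closure ⟨a, rfl⟩⟩ = Quot.mk r ⟨α b, subset_closure ⟨b, rfl⟩⟩ := by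
    intro a b hab
    refine Quot.sound ?_
    show (α a)⁻¹ * (α b) ∈ @closure _ T (⇑α '' (Λ : Set Γ))
    have h1 : a⁻¹ * b ∈ Λ := QuotientGroup.leftRel_apply.mp hab
    have h2 : (α a)⁻¹ * α b = α (a⁻¹ * b) := by rw [map_mul, map_inv]
    rw [h2]
    exact subset_closure ⟨a⁻¹ * b, h1, rfl⟩
  let f : (Γ ⧸ Λ) → Quot r :=
    Quotient.lift (fun γ : Γ => Quot.mk r ⟨α γ, subset_closure ⟨γ, rfl⟩⟩)
      (fun a b hab => hwd a b hab)
  -- the evaluation map, used for injectivity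
  let g : Quot r → (Γ ⧸ Λ) :=
    Quot.lift (fun x => (x : Equiv.Perm (Γ ⧸ Λ)) (QuotientGroup.mk (1 : Γ)))
      (by
        rintro ⟨x, hx⟩ ⟨y, hy⟩ hxy
        have h1 := hfix _ hxy
        simp only [Equiv.Perm.mul_apply] at h1
        have h2 := congrArg x h1
        rw [← Equiv.Perm.mul_apply, mul_inv_cancel, Equiv.Perm.one_apply] at h2
        exact h2.symm)
  have hinj : Function.Injective f := by
    intro a b
    induction a using Quotient.inductionOn with | h a =>
    induction b using Quotient.inductionOn with | h b =>
    intro hab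
    have h0 := congrArg g hab
    have ha : g (f (Quotient.mk _ a)) = QuotientGroup.mk a := by
      show (α a) (QuotientGroup.mk (1 : Γ)) = _
      rw [hα]; simp
    have hb : g (f (Quotient.mk _ b)) = QuotientGroup.mk b := by
      show (α b) (QuotientGroup.mk (1 : Γ)) = _
      rw [hα]; simp
    rw [ha, hb] at h0
    exact h0
  have hsurj : Function.Surjective f := by
    intro b
    induction b using Quot.inductionOn with | h x =>
    obtain ⟨x, hx⟩ := x
    -- find γ with α γ agreeing with x at the identity coset
    obtain ⟨σ, ⟨γ, rfl⟩, hσ⟩ := permTop_approx hx {QuotientGroup.mk (1 : Γ)}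
    have hγ1 : (α γ) (QuotientGroup.mk (1 : Γ)) = x (QuotientGroup.mk (1 : Γ)) :=
      hσ _ (Finset.mem_singleton_self _)
    refine ⟨QuotientGroup.mk γ, ?_⟩
    show Quot.mk r ⟨α γ, subset_closure ⟨γ, rfl⟩⟩ = Quot.mk r ⟨x, hx⟩
    refine Quot.sound ?_
    show (α γ)⁻¹ * x ∈ @closure _ T (⇑α '' (Λ : Set Γ))
    refine permTop_mem_closure fun F => ?_
    obtain ⟨τ, ⟨γ₀, rfl⟩, hτ⟩ :=
      permTop_approx hx (F ∪ {QuotientGroup.mk (1 : Γ)})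
    have hγ₀1 : (α γ₀) (QuotientGroup.mk (1 : Γ)) = x (QuotientGroup.mk (1 : Γ)) :=
      hτ _ (Finset.mem_union_right _ (Finset.mem_singleton_self _))
    have hmem : γ⁻¹ * γ₀ ∈ Λ := by
      have heq : (QuotientGroup.mk γ : Γ ⧸ Λ) = QuotientGroup.mk γ₀ := by
        have h1 : (QuotientGroup.mk (γ * 1) : Γ ⧸ Λ) = QuotientGroup.mk (γ₀ * 1) := by
          rw [← hα, ← hα, hγ1, hγ₀1]
        simpa using h1
      exact QuotientGroup.eq.mp heq
    refine ⟨α (γ⁻¹ * γ₀), ⟨γ⁻¹ * γ₀, hmem, rfl⟩, fun p hp => ?_⟩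
    have hxp : (α γ₀) p = x p := hτ _ (Finset.mem_union_left _ hp)
    have h3 : α (γ⁻¹ * γ₀) = (α γ)⁻¹ * α γ₀ := by rw [map_mul, map_inv]
    rw [h3]
    show (α γ)⁻¹ ((α γ₀) p) = (α γ)⁻¹ (x p)
    rw [hxp]
  exact ⟨Equiv.ofBijective f ⟨hinj, hsurj⟩, fun γ => rfl⟩
end

section
/- Let Λ ≤ Γ be a commensurated subgroup and G = Γ//Λ its Schlichting completion, with U the closure of the image of Λ. Then U is a compact open subgroup of G. -/
open scoped Pointwise

lemma mem_closure_pi' {X : Type*} {S : Set (X → X)} {f : X → X} :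
    letI : TopologicalSpace X := ⊥
    (f ∈ closure S ↔ ∀ F : Finset X, ∃ g ∈ S, ∀ x ∈ F, g x = f x) := by
  letI : TopologicalSpace X := ⊥
  haveI : DiscreteTopology X := ⟨rfl⟩
  constructor
  · intro hf F
    have ht : IsOpen {g : X → X | ∀ x ∈ F, g x = f x} := by
      have he : {g : X → X | ∀ x ∈ F, g x = f x} = Set.pi ↑F (fun x => {f x}) := by
        ext g; simp [Set.mem_pi]
      rw [he]
      exact isOpen_set_pi F.finite_toSet (fun _ _ => isOpen_discrete _)
    obtain ⟨g, hg1, hg2⟩ := mem_closure_iff.mp hf _ ht (by simp)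
    exact ⟨g, hg2, hg1⟩
  · intro h
    rw [mem_closure_iff]
    intro O hO hfO
    obtain ⟨I, u, hu, hsub⟩ := isOpen_pi_iff.mp hO f hfO
    obtain ⟨g, hgS, hg⟩ := h I
    refine ⟨g, hsub fun x hx => ?_, hgS⟩
    rw [hg x hx]; exact (hu x hx).2

lemma mem_closure_perm {X : Type*} {S : Set (Equiv.Perm X)} {σ : Equiv.Perm X} :
    letI := permTop X
    (σ ∈ closure S ↔ ∀ F : Finset X, ∃ s ∈ S, ∀ x ∈ F, s x = σ x) := by
  letI : TopologicalSpace X := ⊥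
  have h := @closure_induced (Equiv.Perm X) (X → X) inferInstance
      (fun τ : Equiv.Perm X => (τ : X → X)) σ S
  rw [show permTop X = TopologicalSpace.induced
      (fun τ : Equiv.Perm X => (τ : X → X)) inferInstance from rfl, h, mem_closure_pi']
  constructor
  · intro hh F
    obtain ⟨g, ⟨s, hs, rfl⟩, hg⟩ := hh F
    exact ⟨s, hs, hg⟩
  · intro hh F
    obtain ⟨s, hs, hg⟩ := hh F
    exact ⟨s, ⟨s, hs, rfl⟩, hg⟩

/-- In the Schlichting completion `G = Γ//Λ`, the closure `U` of the image of the
commensurated subgroup `Λ` is a compact open subgroup of `G`. -/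
theorem stmt_8 (Γ : Type*) [Group Γ] (Λ : Subgroup Γ)
    (hΛ : ∀ g : ConjAct Γ, Subgroup.Commensurable (g • Λ) Λ) :
    letI := permTop (Γ ⧸ Λ)
    let α := MulAction.toPermHom Γ (Γ ⧸ Λ)
    let U := closure (⇑α '' Λ)
    -- `U` is a subgroup of `Sym(Γ/Λ)` (hence of `G`, as `U ⊆ G`):
    (∃ H : Subgroup (Equiv.Perm (Γ ⧸ Λ)), (H : Set (Equiv.Perm (Γ ⧸ Λ))) = U) ∧
    -- `U` is compact:
    IsCompact U ∧
    -- `U` is open in the subspace topology of `G = closure (α(Γ))`: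
    IsOpen ((fun x : {x // x ∈ closure (Set.range ⇑α)} => (x : Equiv.Perm (Γ ⧸ Λ))) ⁻¹' U) := by
  intro α U
  classical
  letI : TopologicalSpace (Γ ⧸ Λ) := ⊥
  haveI : DiscreteTopology (Γ ⧸ Λ) := ⟨rfl⟩
  letI := permTop (Γ ⧸ Λ)
  have hmemU : ∀ σ : Equiv.Perm (Γ ⧸ Λ),
      σ ∈ U ↔ ∀ F : Finset (Γ ⧸ Λ), ∃ γ ∈ Λ, ∀ x ∈ F, α γ x = σ x := by
    intro σ
    rw [show (σ ∈ U) = (σ ∈ closure (⇑α '' ↑Λ)) from rfl, mem_closure_perm]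
    constructor
    · intro h F; obtain ⟨s, ⟨γ, hγ, rfl⟩, hs⟩ := h F; exact ⟨γ, hγ, hs⟩
    · intro h F; obtain ⟨γ, hγ, hs⟩ := h F; exact ⟨α γ, ⟨γ, hγ, rfl⟩, hs⟩
  have hα : ∀ (γ : Γ) (x : Γ ⧸ Λ), α γ x = γ • x := fun _ _ => rfl
  refine ⟨?_, ?_, ?_⟩
  · -- subgroup
    refine ⟨{ carrier := U
              one_mem' := subset_closure ⟨1, one_mem Λ, by ext x; simp [hα]⟩
              mul_mem' := ?_
              inv_mem' := ?_ }, rfl⟩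
    · intro a b ha hb
      rw [hmemU] at ha hb ⊢
      intro F
      obtain ⟨μ, hμ, hbs⟩ := hb F
      obtain ⟨l, hl, has⟩ := ha (F.image b)
      refine ⟨l * μ, mul_mem hl hμ, fun x hx => ?_⟩
      have h1 : α l (b x) = a (b x) := has _ (Finset.mem_image_of_mem _ hx)
      calc α (l * μ) x = α l (α μ x) := by rw [map_mul]; rfl
        _ = α l (b x) := by rw [hbs x hx]
        _ = (a * b) x := h1
    · intro a ha
      rw [hmemU] at ha ⊢
      intro F
      obtain ⟨l, hl, has⟩ := ha (F.image ⇑a⁻¹)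
      refine ⟨l⁻¹, inv_mem hl, fun x hx => ?_⟩
      have h1 : α l (a⁻¹ x) = a (a⁻¹ x) := has _ (Finset.mem_image_of_mem _ hx)
      rw [show a (a⁻¹ x) = x from a.apply_symm_apply x] at h1
      have : α l⁻¹ (α l (a⁻¹ x)) = a⁻¹ x := by
        rw [← Equiv.Perm.mul_apply, ← map_mul, inv_mul_cancel, map_one]; rfl
      rw [h1] at this; exact this
  · -- compact
    have horb : ∀ x : Γ ⧸ Λ, (MulAction.orbit Λ x).Finite := by
      intro x
      induction x using QuotientGroup.induction_on with
      | H g =>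
        have hs : MulAction.stabilizer Λ ((g : Γ) : Γ ⧸ Λ)
            = (ConjAct.toConjAct g • Λ).subgroupOf Λ := by
          ext l
          simp only [MulAction.mem_stabilizer_iff, Subgroup.mem_subgroupOf,
            Subgroup.mem_pointwise_smul_iff_inv_smul_mem, ConjAct.smul_def]
          have hsmul : (l : Λ) • ((g : Γ) : Γ ⧸ Λ) = (((l : Γ) * g : Γ) : Γ ⧸ Λ) := rfl
          rw [hsmul, QuotientGroup.eq]
          constructor
          · intro h
            have h2 : g⁻¹ * (l : Γ) * g ∈ Λ := by
              have := inv_mem h; group at this ⊢; exact this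
            simpa [ConjAct.ofConjAct_inv, ConjAct.ofConjAct_toConjAct, mul_assoc] using h2
          · intro h
            have h2 : g⁻¹ * (l : Γ) * g ∈ Λ := by
              simpa [ConjAct.ofConjAct_inv, ConjAct.ofConjAct_toConjAct, mul_assoc] using h
            have := inv_mem h2; group at this ⊢; exact this
        have hstab : (MulAction.stabilizer Λ ((g : Γ) : Γ ⧸ Λ)).index ≠ 0 := by
          rw [hs]; exact (hΛ (ConjAct.toConjAct g)).1
        haveI : Finite (Λ ⧸ MulAction.stabilizer Λ ((g : Γ) : Γ ⧸ Λ)) :=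
          (Nat.card_ne_zero.mp hstab).2
        haveI : Finite (MulAction.orbit Λ ((g : Γ) : Γ ⧸ Λ)) :=
          Finite.of_equiv _ (MulAction.orbitEquivQuotientStabilizer Λ ((g : Γ) : Γ ⧸ Λ)).symm
        exact Set.toFinite _
    have hincl : Topology.IsInducing
        (fun σ : Equiv.Perm (Γ ⧸ Λ) => (σ : (Γ ⧸ Λ) → (Γ ⧸ Λ))) := ⟨rfl⟩
    rw [hincl.isCompact_iff]
    have himg : (fun σ : Equiv.Perm (Γ ⧸ Λ) => ⇑σ) '' U
        = closure ((fun σ : Equiv.Perm (Γ ⧸ Λ) => ⇑σ) '' (⇑α '' ↑Λ)) := by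
      apply Set.Subset.antisymm
      · exact image_closure_subset_closure_image hincl.continuous
      · intro f hf
        rw [mem_closure_pi'] at hf
        have hf' : ∀ F : Finset (Γ ⧸ Λ), ∃ γ ∈ Λ, ∀ x ∈ F, α γ x = f x := by
          intro F
          obtain ⟨g, ⟨s, ⟨γ, hγ, rfl⟩, rfl⟩, hg⟩ := hf F
          exact ⟨γ, hγ, hg⟩
        have hinj : Function.Injective f := by
          intro x y hxy
          obtain ⟨γ, hγ, hg⟩ := hf' {x, y}
          have hx := hg x (by simp); have hy := hg y (by simp)
          rw [← hx, ← hy] at hxy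
          exact (α γ).injective hxy
        have hsurj : Function.Surjective f := by
          intro x
          obtain ⟨γ, hγ, hg⟩ := hf' (horb x).toFinset
          have hmap : (horb x).toFinset.image (α γ) ⊆ (horb x).toFinset := by
            intro y hy
            obtain ⟨z, hz, rfl⟩ := Finset.mem_image.mp hy
            rw [Set.Finite.mem_toFinset] at hz ⊢
            obtain ⟨m, rfl⟩ := hz
            refine ⟨⟨γ, hγ⟩ * m, ?_⟩
            show ((⟨γ, hγ⟩ : Λ) * m) • x = (α γ) (m • x)
            rw [mul_smul]; rfl
          have hcard : (horb x).toFinset.card ≤ ((horb x).toFinset.image (α γ)).card := by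
            rw [Finset.card_image_of_injective _ (α γ).injective]
          have heq := Finset.eq_of_subset_of_card_le hmap hcard
          have hxF : x ∈ (horb x).toFinset := by
            rw [Set.Finite.mem_toFinset]; exact ⟨1, one_smul _ _⟩
          rw [← heq] at hxF
          obtain ⟨y, hyF, hyx⟩ := Finset.mem_image.mp hxF
          exact ⟨y, by rw [← hg y hyF, hyx]⟩
        refine ⟨Equiv.ofBijective f ⟨hinj, hsurj⟩, (hmemU _).mpr ?_, rfl⟩
        intro F
        obtain ⟨γ, hγ, hg⟩ := hf' F
        exact ⟨γ, hγ, fun y hy => hg y hy⟩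
    rw [himg]
    have hK : IsCompact (Set.pi Set.univ fun x : Γ ⧸ Λ => MulAction.orbit Λ x) :=
      isCompact_univ_pi fun x => (horb x).isCompact
    refine hK.of_isClosed_subset isClosed_closure (closure_minimal ?_ ?_)
    · rintro f ⟨s, ⟨γ, hγ, rfl⟩, rfl⟩ x _
      exact ⟨⟨γ, hγ⟩, rfl⟩
    · exact isClosed_set_pi fun x _ => isClosed_discrete _
  · -- open
    have hincl : Topology.IsInducing
        (fun σ : Equiv.Perm (Γ ⧸ Λ) => (σ : (Γ ⧸ Λ) → (Γ ⧸ Λ))) := ⟨rfl⟩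
    set e : Γ ⧸ Λ := ((1 : Γ) : Γ ⧸ Λ) with he
    have hVopen : IsOpen {σ : Equiv.Perm (Γ ⧸ Λ) | σ e = e} := by
      have hc : Continuous fun σ : Equiv.Perm (Γ ⧸ Λ) => σ e :=
        (continuous_apply e).comp hincl.continuous
      have : {σ : Equiv.Perm (Γ ⧸ Λ) | σ e = e} = (fun σ : Equiv.Perm (Γ ⧸ Λ) => σ e) ⁻¹' {e} := by
        ext σ; simp
      rw [this]
      exact (isOpen_discrete _).preimage hc
    have hset : ((fun x : {x // x ∈ closure (Set.range ⇑α)} => (x : Equiv.Perm (Γ ⧸ Λ))) ⁻¹' U)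
        = ((fun x : {x // x ∈ closure (Set.range ⇑α)} => (x : Equiv.Perm (Γ ⧸ Λ))) ⁻¹'
            {σ : Equiv.Perm (Γ ⧸ Λ) | σ e = e}) := by
      ext ⟨x, hx⟩
      simp only [Set.mem_preimage, Set.mem_setOf_eq]
      constructor
      · intro hxU
        obtain ⟨γ, hγ, hg⟩ := (hmemU x).mp hxU {e}
        rw [← hg e (Finset.mem_singleton_self e), hα]
        have : γ • e = (((γ * 1 : Γ)) : Γ ⧸ Λ) := rfl
        rw [this, mul_one, he]
        exact (QuotientGroup.eq).mpr (by simpa using inv_mem hγ)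
      · intro h1
        rw [hmemU]
        intro F
        obtain ⟨s, ⟨γ, rfl⟩, hg⟩ := mem_closure_perm.mp hx (insert e F)
        have hγΛ : γ ∈ Λ := by
          have h2 := hg e (Finset.mem_insert_self e F)
          rw [h1] at h2
          have h3 : ((γ * 1 : Γ) : Γ ⧸ Λ) = ((1 : Γ) : Γ ⧸ Λ) := h2
          rw [mul_one] at h3
          simpa using (QuotientGroup.eq).mp h3
        exact ⟨γ, hγΛ, fun y hy => hg y (Finset.mem_insert_of_mem hy)⟩
    rw [hset]
    exact hVopen.preimage continuous_subtype_val
end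

section
/- Let Λ ≤ Γ be a commensurated subgroup with Λ finitely generated, and suppose the Schlichting completion G = Γ//Λ is compactly generated (i.e., generated as a group by a compact subset). Then Γ is finitely generated. -/
open scoped Pointwise

/-- If the Schlichting completion `G = Γ//Λ` is compactly generated and the
commensurated subgroup `Λ` is finitely generated, then `Γ` is finitely generated. -/
theorem stmt_10 (Γ : Type*) [Group Γ] (Λ : Subgroup Γ)
    (hΛ : ∀ g : ConjAct Γ, Subgroup.Commensurable (g • Λ) Λ)
    (hΛfg : Λ.FG) :
    letI := permTop (Γ ⧸ Λ)
    -- if some compact subset generates `G = Γ//Λ` as a group ...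
    (∃ K : Set (Equiv.Perm (Γ ⧸ Λ)), IsCompact K ∧
        (Subgroup.closure K : Set (Equiv.Perm (Γ ⧸ Λ)))
          = closure (Set.range ⇑(MulAction.toPermHom Γ (Γ ⧸ Λ)))) →
    -- ... then `Γ` is finitely generated.
    Group.FG Γ := by
  intro hK
  letI : TopologicalSpace (Equiv.Perm (Γ ⧸ Λ)) := permTop (Γ ⧸ Λ)
  letI tX : TopologicalSpace (Γ ⧸ Λ) := ⊥
  haveI : DiscreteTopology (Γ ⧸ Λ) := ⟨rfl⟩
  obtain ⟨K, hKc, hKgen⟩ := hK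
  set α := MulAction.toPermHom Γ (Γ ⧸ Λ) with hαdef
  set x₀ : Γ ⧸ Λ := QuotientGroup.mk 1 with hx₀
  -- evaluation maps are continuous
  have hev : ∀ y : Γ ⧸ Λ, Continuous (fun σ : Equiv.Perm (Γ ⧸ Λ) => σ y) := fun y =>
    (continuous_apply y).comp continuous_induced_dom
  have hevinv : Continuous (fun σ : Equiv.Perm (Γ ⧸ Λ) => σ⁻¹ x₀) := by
    rw [continuous_discrete_rng]
    intro y
    have : (fun σ : Equiv.Perm (Γ ⧸ Λ) => σ⁻¹ x₀) ⁻¹' {y}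
        = (fun σ : Equiv.Perm (Γ ⧸ Λ) => σ y) ⁻¹' {x₀} := by
      ext σ
      simp only [Set.mem_preimage, Set.mem_singleton_iff, Equiv.Perm.inv_def]
      rw [Equiv.symm_apply_eq, eq_comm]
    rw [this]
    exact (hev y).isOpen_preimage _ (isOpen_discrete _)
  -- the images of the basepoint under K and K⁻¹ are finite
  set T : Set (Γ ⧸ Λ) := ((fun σ : Equiv.Perm (Γ ⧸ Λ) => σ x₀) '' K)
      ∪ ((fun σ : Equiv.Perm (Γ ⧸ Λ) => σ⁻¹ x₀) '' K) with hTdef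
  have hTfin : T.Finite :=
    (hKc.image (hev x₀)).finite_of_discrete.union (hKc.image hevinv).finite_of_discrete
  -- choose representatives
  have hsurj : Function.Surjective (QuotientGroup.mk : Γ → Γ ⧸ Λ) := QuotientGroup.mk_surjective
  set r : Γ ⧸ Λ → Γ := fun x => (hsurj x).choose with hrdef
  have hr : ∀ x : Γ ⧸ Λ, QuotientGroup.mk (r x) = x := fun x => (hsurj x).choose_spec
  set F : Set Γ := r '' T with hFdef
  have hFfin : F.Finite := hTfin.image r
  set H : Subgroup Γ := Subgroup.closure ((Λ : Set Γ) ∪ F) with hHdef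
  -- action facts
  have hact : ∀ (γ h : Γ), α γ (QuotientGroup.mk h) = QuotientGroup.mk (γ * h) := fun γ h => rfl
  -- density
  have dens : ∀ g : Equiv.Perm (Γ ⧸ Λ), g ∈ Subgroup.closure K → ∀ y : Γ ⧸ Λ,
      ∃ γ : Γ, α γ x₀ = g x₀ ∧ α γ y = g y := by
    intro g hg y
    have hg' : g ∈ closure (Set.range ⇑α) := by
      rw [← hKgen]; exact hg
    have hV : IsOpen ({σ : Equiv.Perm (Γ ⧸ Λ) | σ x₀ = g x₀} ∩ {σ | σ y = g y}) := by
      refine IsOpen.inter ?_ ?_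
      · exact (hev x₀).isOpen_preimage {g x₀} (isOpen_discrete _)
      · exact (hev y).isOpen_preimage {g y} (isOpen_discrete _)
    obtain ⟨σ, hσV, hσr⟩ := mem_closure_iff.mp hg' _ hV ⟨rfl, rfl⟩
    obtain ⟨γ, rfl⟩ := hσr
    exact ⟨γ, hσV.1, hσV.2⟩
  -- key step: elements of ⟨K⟩ sending x₀ into T preserve the H-cosets
  have key : ∀ g : Equiv.Perm (Γ ⧸ Λ), g ∈ Subgroup.closure K → g x₀ ∈ T →
      ∀ h : Γ, h ∈ H → ∃ h' ∈ H, QuotientGroup.mk h' = g (QuotientGroup.mk h) := by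
    intro g hg hgT h hh
    obtain ⟨γ, hγ1, hγ2⟩ := dens g hg (QuotientGroup.mk h)
    have hγΛ : (QuotientGroup.mk γ : Γ ⧸ Λ) = g x₀ := by
      rw [← hγ1, hact γ 1, mul_one]
    have hfF : r (g x₀) ∈ F := Set.mem_image_of_mem r hgT
    have hmem : (r (g x₀))⁻¹ * γ ∈ Λ := QuotientGroup.eq.mp ((hr _).trans hγΛ.symm)
    have hγH : γ ∈ H := by
      have hγeq : γ = r (g x₀) * ((r (g x₀))⁻¹ * γ) := by group
      rw [hγeq]
      exact mul_mem (Subgroup.subset_closure (Or.inr hfF))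
        (Subgroup.subset_closure (Or.inl hmem))
    exact ⟨γ * h, mul_mem hγH hh, by rw [← hγ2, hact]⟩
  -- invariance of the H-coset set under ⟨K⟩
  have inv : ∀ g : Equiv.Perm (Γ ⧸ Λ), g ∈ Subgroup.closure K →
      ∀ h : Γ, h ∈ H → (∃ h' ∈ H, QuotientGroup.mk h' = g (QuotientGroup.mk h)) ∧
        (∃ h' ∈ H, QuotientGroup.mk h' = g⁻¹ (QuotientGroup.mk h)) := by
    intro g hg
    induction hg using Subgroup.closure_induction with
    | mem k hk =>
      intro h hh
      constructor
      · exact key k (Subgroup.subset_closure hk) (Or.inl (Set.mem_image_of_mem _ hk)) h hh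
      · exact key k⁻¹ (inv_mem (Subgroup.subset_closure hk))
          (Or.inr (Set.mem_image_of_mem _ hk)) h hh
    | one =>
      intro h hh
      exact ⟨⟨h, hh, rfl⟩, ⟨h, hh, by simp⟩⟩
    | mul x y hx hy ihx ihy =>
      intro h hh
      constructor
      · obtain ⟨h₁, hh₁, he₁⟩ := (ihy h hh).1
        obtain ⟨h₂, hh₂, he₂⟩ := (ihx h₁ hh₁).1
        exact ⟨h₂, hh₂, by rw [he₂, he₁, Equiv.Perm.mul_apply]⟩
      · obtain ⟨h₁, hh₁, he₁⟩ := (ihx h hh).2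
        obtain ⟨h₂, hh₂, he₂⟩ := (ihy h₁ hh₁).2
        exact ⟨h₂, hh₂, by rw [he₂, he₁, mul_inv_rev, Equiv.Perm.mul_apply]⟩
    | inv x hx ihx =>
      intro h hh
      exact ⟨(ihx h hh).2, by simpa using (ihx h hh).1⟩
  -- every element of Γ lies in H
  have hH : ∀ γ : Γ, γ ∈ H := by
    intro γ
    have hαγ : α γ ∈ Subgroup.closure K := by
      rw [← SetLike.mem_coe, hKgen]
      exact subset_closure (Set.mem_range_self γ)
    obtain ⟨h', hh', he⟩ := (inv (α γ) hαγ 1 (one_mem H)).1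
    have : h'⁻¹ * γ ∈ Λ := by
      rw [hact γ 1, mul_one] at he
      exact QuotientGroup.eq.mp he
    have hγeq : γ = h' * (h'⁻¹ * γ) := by group
    rw [hγeq]
    exact mul_mem hh' (Subgroup.subset_closure (Or.inl this))
  -- conclude
  obtain ⟨S, hS, hSfin⟩ := (Subgroup.fg_iff Λ).mp hΛfg
  rw [Group.fg_iff]
  refine ⟨S ∪ F, ?_, hSfin.union hFfin⟩
  rw [eq_top_iff]
  intro γ _
  have hγ : γ ∈ H := hH γ
  rw [hHdef, Subgroup.closure_union, Subgroup.closure_eq] at hγ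
  rwa [Subgroup.closure_union, hS]
end

section
/- Let R be a commutative ring with ℚ ⊆ R (i.e., R is a ℚ-algebra), and let Λ be a locally finite group (every finitely generated subgroup is finite). Then the trivial module R is flat as an R[Λ]-module. -/
open MonoidAlgebra

lemma avg_lemma (R : Type*) [CommRing R] [Algebra ℚ R]
    (Λ : Type*) [Group Λ]
    (hlf : ∀ s : Finset Λ, ((Subgroup.closure (s : Set Λ) : Subgroup Λ) : Set Λ).Finite)
    (b : MonoidAlgebra R Λ) (hb : (MonoidAlgebra.lift R R Λ) 1 b = 0) :
    ∃ e : MonoidAlgebra R Λ, (MonoidAlgebra.lift R R Λ) 1 e = 1 ∧ b * e = 0 := by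
  classical
  set G := Subgroup.closure (b.coeff.support : Set Λ) with hGdef
  have hfin := hlf b.coeff.support
  set T : Finset Λ := hfin.toFinset with hT
  have hmemT : ∀ g, g ∈ T ↔ g ∈ G := fun g => hfin.mem_toFinset
  have hone : (1 : Λ) ∈ T := (hmemT 1).2 (one_mem G)
  have hcard : (T.card : ℚ) ≠ 0 := by
    exact_mod_cast Finset.card_ne_zero_of_mem hone
  set c : R := algebraMap ℚ R ((T.card : ℚ)⁻¹) with hc
  set e : MonoidAlgebra R Λ := ∑ h ∈ T, single h c with he
  have heps : (MonoidAlgebra.lift R R Λ) 1 e = 1 := by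
    rw [he, map_sum]
    simp only [MonoidAlgebra.lift_single, MonoidHom.one_apply, smul_eq_mul, mul_one]
    rw [Finset.sum_const, nsmul_eq_mul, hc, ← map_natCast (algebraMap ℚ R) T.card,
      ← map_mul, mul_inv_cancel₀ hcard, map_one]
  refine ⟨e, heps, ?_⟩
  have hsingle : ∀ g ∈ G, ∀ r : R, single g r * e = r • e := by
    intro g hg r
    rw [he, Finset.mul_sum, Finset.smul_sum]
    rw [Finset.sum_nbij' (i := fun h => g * h) (j := fun h => g⁻¹ * h)]
    · intro h hh
      rw [hmemT] at hh ⊢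
      exact mul_mem hg hh
    · intro h hh
      rw [hmemT] at hh ⊢
      exact mul_mem (inv_mem hg) hh
    · intro h _; group
    · intro h _; group
    · intro h _
      rw [MonoidAlgebra.single_mul_single, MonoidAlgebra.smul_single']
  have hb' : (∑ g ∈ b.coeff.support, b.coeff g) = 0 := by
    rw [MonoidAlgebra.lift_apply] at hb
    simpa [Finsupp.sum] using hb
  calc b * e = (∑ g ∈ b.coeff.support, single g (b.coeff g)) * e := by
        rw [← Finsupp.sum, MonoidAlgebra.sum_coeff_single]
    _ = ∑ g ∈ b.coeff.support, single g (b.coeff g) * e := Finset.sum_mul _ _ _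
    _ = ∑ g ∈ b.coeff.support, (b.coeff g) • e := by
        refine Finset.sum_congr rfl fun g hg => ?_
        exact hsingle g (Subgroup.subset_closure (by exact_mod_cast hg)) _
    _ = (∑ g ∈ b.coeff.support, b.coeff g) • e := by rw [Finset.sum_smul]
    _ = 0 := by rw [hb', zero_smul]

/-- The right `A`-module (i.e. `Aᵐᵒᵖ`-module) structure on the character group
`M →+ ℚ/ℤ` of a left `A`-module `M`, given by `(a • f) m = f (a • m)`. -/
def charModuleStructure (A : Type*) [Ring A] (M : Type*) [AddCommMonoid M] [Module A M] :
    Module Aᵐᵒᵖ (M →+ AddCircle (1 : ℚ)) where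
  smul a f := f.comp (DistribMulAction.toAddMonoidHom M a.unop)
  one_smul f := by
    ext m; show f ((1 : Aᵐᵒᵖ).unop • m) = f m
    rw [MulOpposite.unop_one, one_smul]
  mul_smul a b f := by
    ext m; show f ((a * b).unop • m) = f (b.unop • a.unop • m)
    rw [MulOpposite.unop_mul, mul_smul]
  smul_zero a := by ext m; rfl
  smul_add a f g := by ext m; rfl
  add_smul a b f := by
    ext m; show f ((a + b).unop • m) = f (a.unop • m) + f (b.unop • m)
    rw [MulOpposite.unop_add, add_smul, map_add]
  zero_smul f := by
    ext m; show f ((0 : Aᵐᵒᵖ).unop • m) = 0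
    rw [MulOpposite.unop_zero, zero_smul, map_zero]

/-- If `R` is a commutative ring containing `ℚ` and `Λ` is a locally finite group,
then the trivial module `R` is flat as an `R[Λ]`-module.  Since `Module.Flat` in
Mathlib requires a commutative base ring, flatness is expressed by Lambek's
criterion: the character module of `R` is injective as a right `R[Λ]`-module. -/
theorem stmt_13 (R : Type*) [CommRing R] [Algebra ℚ R]
    (Λ : Type*) [Group Λ]
    (hlf : ∀ s : Finset Λ, ((Subgroup.closure (s : Set Λ) : Subgroup Λ) : Set Λ).Finite) :
    -- `R` as the trivial `R[Λ]`-module, via the augmentation `R[Λ] → R`: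
    letI : Module (MonoidAlgebra R Λ) R :=
      Module.compHom R ((MonoidAlgebra.lift R R Λ) 1).toRingHom
    letI := charModuleStructure (MonoidAlgebra R Λ) R
    Module.Injective (MonoidAlgebra R Λ)ᵐᵒᵖ (R →+ AddCircle (1 : ℚ)) := by
  classical
  letI instR : Module (MonoidAlgebra R Λ) R :=
    Module.compHom R ((MonoidAlgebra.lift R R Λ) 1).toRingHom
  letI instQ := charModuleStructure (MonoidAlgebra R Λ) R
  set ε : MonoidAlgebra R Λ →+* R := ((MonoidAlgebra.lift R R Λ) 1).toRingHom with hεdef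
  refine Module.Baer.injective ?_
  intro I f
  have hsmulR : ∀ (a : MonoidAlgebra R Λ) (r : R), a • r = ε a * r := fun a r => rfl
  have hsmulQ : ∀ (a : (MonoidAlgebra R Λ)ᵐᵒᵖ) (q : R →+ AddCircle (1 : ℚ)) (r : R),
      (a • q) r = q (a.unop • r) := fun a q r => rfl
  -- Step A: f vanishes on augmentation-kernel elements of I
  have key : ∀ x : I, ε (MulOpposite.unop x.1) = 0 → f x = 0 := by
    intro x hx
    obtain ⟨e, he1, he2⟩ := avg_lemma R Λ hlf (MulOpposite.unop x.1) hx
    have h0 : (MulOpposite.op e) • x = 0 := by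
      apply Subtype.ext
      show MulOpposite.op e * x.1 = 0
      rw [← MulOpposite.op_unop x.1, ← MulOpposite.op_mul, he2, MulOpposite.op_zero]
    have h1 : MulOpposite.op e • f x = 0 := by
      rw [← map_smul, h0, map_zero]
    have he1' : ε e = 1 := he1
    ext r
    have h2 : (MulOpposite.op e • f x) r = f x r := by
      rw [hsmulQ, MulOpposite.unop_op, hsmulR, he1', one_mul]
    rw [← h2, h1]
  -- Step B: factor through the augmentation and extend
  set α : I →+ R :=
    { toFun := fun x => ε (MulOpposite.unop x.1)
      map_zero' := by simp
      map_add' := fun x y => by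
        show ε (MulOpposite.unop (x.1 + y.1)) = _
        rw [MulOpposite.unop_add, map_add] } with hα
  set β : I →+ AddCircle (1 : ℚ) :=
    { toFun := fun x => f x 1
      map_zero' := by simp
      map_add' := fun x y => by simp } with hβ
  have hker : ∀ x ∈ α.ker, β x = 0 := by
    intro x hx
    have : f x = 0 := key x hx
    show f x 1 = 0
    rw [this]; rfl
  set γ : (I ⧸ α.ker) →+ AddCircle (1 : ℚ) := QuotientAddGroup.lift α.ker β hker with hγ
  obtain ⟨q, hq⟩ := (Module.Baer.of_divisible (AddCircle (1 : ℚ))).extension_property_addMonoidHom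
    (QuotientAddGroup.kerLift α) (QuotientAddGroup.kerLift_injective α) γ
  have hq' : ∀ x : I, q (ε (MulOpposite.unop x.1)) = f x 1 := by
    intro x
    have := DFunLike.congr_fun hq (QuotientAddGroup.mk x)
    rw [AddMonoidHom.comp_apply] at this
    rw [QuotientAddGroup.kerLift_mk α x] at this
    rw [hγ] at this
    rw [QuotientAddGroup.lift_mk' α.ker hker x] at this
    exact this
  refine ⟨{ toFun := fun a => a • q
            map_add' := fun a b => add_smul a b q
            map_smul' := fun a b => mul_smul a b q }, ?_⟩
  intro x hx
  ext r
  show q ((MulOpposite.unop x) • r) = f ⟨x, hx⟩ r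
  set a := MulOpposite.unop x with ha
  have hr1 : ε (MonoidAlgebra.single (1 : Λ) r) = r := by
    show (MonoidAlgebra.lift R R Λ) 1 (MonoidAlgebra.single (1 : Λ) r) = r
    rw [MonoidAlgebra.lift_single]; simp
  have hy : MulOpposite.op (a * MonoidAlgebra.single (1 : Λ) r) ∈ I := by
    have : MulOpposite.op (a * MonoidAlgebra.single (1 : Λ) r)
        = MulOpposite.op (MonoidAlgebra.single (1 : Λ) r) * x := by
      rw [← MulOpposite.op_unop x, ← MulOpposite.op_mul]
    rw [this]
    exact I.mul_mem_left _ hx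
  have step1 : (MulOpposite.unop x) • r = ε (a * MonoidAlgebra.single (1 : Λ) r) := by
    rw [hsmulR, map_mul, hr1, ← ha]
  rw [step1]
  have step2 := hq' ⟨MulOpposite.op (a * MonoidAlgebra.single (1 : Λ) r), hy⟩
  rw [MulOpposite.unop_op] at step2
  rw [step2]
  have step3 : (⟨MulOpposite.op (a * MonoidAlgebra.single (1 : Λ) r), hy⟩ : I)
      = MulOpposite.op (MonoidAlgebra.single (1 : Λ) r) • (⟨x, hx⟩ : I) := by
    apply Subtype.ext
    show _ = MulOpposite.op (MonoidAlgebra.single (1 : Λ) r) * x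
    rw [← MulOpposite.op_unop x, ← MulOpposite.op_mul]
  rw [step3, map_smul]
  rw [hsmulQ, MulOpposite.unop_op, hsmulR, hr1, mul_one]
end
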